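/- The variation of information is a metric on the set of partitions of a finite set: $\mathrm{VI}(P,Q) = H(P) + H(Q) - 2I(P,Q)$ satisfies $\mathrm{VI}(P,Q) \geq 0$, $\mathrm{VI}(P,Q) = 0$ iff $P = Q$, symmetry, and the triangle inequality $\mathrm{VI}(P,R) \leq \mathrm{VI}(P,Q) + \mathrm{VI}(Q,R)$. -/

import Mathlib

open Finset

variable {S : Type*} [Fintype S] [DecidableEq S]

/-- The entropy of a partition `P` of the finite set `S`:
`H(P) = -∑_B (|B|/n) log(|B|/n)` with `n = |S|` (natural logarithm,
`0 log 0 = 0`). -/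
noncomputable def partitionEntropy (P : Finpartition (univ : Finset S)) : ℝ :=
  -∑ B ∈ P.parts, ((B.card : ℝ) / Fintype.card S) *
      Real.log ((B.card : ℝ) / Fintype.card S)

/-- The joint entropy of two partitions `P, Q` of `S`:
`H(P,Q) = -∑_{B,C} (|B∩C|/n) log(|B∩C|/n)`. -/
noncomputable def jointEntropy (P Q : Finpartition (univ : Finset S)) : ℝ :=
  -∑ B ∈ P.parts, ∑ C ∈ Q.parts,
      (((B ∩ C).card : ℝ) / Fintype.card S) *
        Real.log (((B ∩ C).card : ℝ) / Fintype.card S)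

/-- The variation of information between two partitions:
`VI(P,Q) = 2H(P,Q) - H(P) - H(Q) = H(P) + H(Q) - 2I(P,Q)`. -/
noncomputable def VI (P Q : Finpartition (univ : Finset S)) : ℝ :=
  2 * jointEntropy P Q - partitionEntropy P - partitionEntropy Q

/-!
Write `η = negMulLog` and `p X = |X| / n`. All the entropies are sums of `η ∘ p` over blocks and
their intersections, and summing `p` over the blocks of a partition recovers `p`. Subadditivity
of `η` on nonnegative reals gives `H(P) ≤ H(P,Q)`, hence `VI ≥ 0`; in its equality case every
block of `P` lies inside a single block of `Q`, so `VI(P,Q) = 0` makes `P` and `Q` refine each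
other. The triangle inequality amounts to `H(P,R) + H(Q) ≤ H(P,Q) + H(Q,R)`: first
`H(P,R) ≤ H(P,Q,R)` by subadditivity, then `H(P,Q,R) + H(Q) ≤ H(P,Q) + H(Q,R)` is the
nonnegativity of the mutual information of `P` and `R` inside each block of `Q`, which follows
from `log x ≤ x - 1`.
-/

namespace Real

lemma mul_log_sub_log_nonneg {x y : ℝ} (hx : 0 ≤ x) (hxy : x ≤ y) :
    0 ≤ x * (log y - log x) := by
  rcases hx.eq_or_lt with rfl | hx
  · simp
  · exact mul_nonneg hx.le (sub_nonneg.2 (log_le_log hx hxy))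

lemma eq_zero_or_eq_of_mul_log_sub_log_eq_zero {x y : ℝ} (hx : 0 ≤ x) (hxy : x ≤ y)
    (h : x * (log y - log x) = 0) : x = 0 ∨ x = y := by
  rcases hx.eq_or_lt with rfl | hx
  · exact .inl rfl
  · have hlog : log x = log y := (sub_eq_zero.1 ((mul_eq_zero.1 h).resolve_left hx.ne')).symm
    exact .inr (log_injOn_pos hx (hx.trans_le hxy) hlog)

lemma mul_log_add_log_sub_log_sub_log_le {a r c t : ℝ} (ha : 0 ≤ a) (hr : a ≤ r) (hc : a ≤ c)
    (ht : a ≤ t) :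
    a * (log r + log c - log t - log a) ≤ r * c / t - a := by
  rcases ha.eq_or_lt with rfl | ha
  · simp only [zero_mul, sub_zero]
    positivity
  have hr := ha.trans_le hr
  have hc := ha.trans_le hc
  have ht := ha.trans_le ht
  have hlog : log r + log c - log t - log a = log (r * c / (t * a)) := by
    rw [log_div (by positivity) (by positivity), log_mul hr.ne' hc.ne', log_mul ht.ne' ha.ne']
    ring
  calc a * (log r + log c - log t - log a) = a * log (r * c / (t * a)) := by rw [hlog]
    _ ≤ a * (r * c / (t * a) - 1) := by gcongr; exact log_le_sub_one_of_pos (by positivity)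
    _ = r * c / t - a := by field_simp

variable {ι κ : Type*}

lemma sum_negMulLog_sub_negMulLog_sum (s : Finset ι) (a : ι → ℝ) :
    ∑ i ∈ s, negMulLog (a i) - negMulLog (∑ i ∈ s, a i)
      = ∑ i ∈ s, a i * (log (∑ j ∈ s, a j) - log (a i)) := by
  simp only [negMulLog, neg_mul, mul_sub, sum_sub_distrib, ← sum_mul, sum_neg_distrib]
  ring

lemma negMulLog_sum_le {s : Finset ι} {a : ι → ℝ} (ha : ∀ i ∈ s, 0 ≤ a i) :
    negMulLog (∑ i ∈ s, a i) ≤ ∑ i ∈ s, negMulLog (a i) := by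
  rw [← sub_nonneg, sum_negMulLog_sub_negMulLog_sum]
  exact sum_nonneg fun i hi ↦ mul_log_sub_log_nonneg (ha i hi) (single_le_sum ha hi)

lemma eq_zero_or_eq_sum_of_negMulLog_sum_eq {s : Finset ι} {a : ι → ℝ}
    (ha : ∀ i ∈ s, 0 ≤ a i)
    (h : negMulLog (∑ i ∈ s, a i) = ∑ i ∈ s, negMulLog (a i)) :
    ∀ i ∈ s, a i = 0 ∨ a i = ∑ j ∈ s, a j := by
  have hterm i (hi : i ∈ s) := mul_log_sub_log_nonneg (ha i hi) (single_le_sum ha hi)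
  have hzero := (sum_eq_zero_iff_of_nonneg hterm).1
    (by rw [← sum_negMulLog_sub_negMulLog_sum, h, sub_self])
  exact fun i hi ↦ eq_zero_or_eq_of_mul_log_sub_log_eq_zero (ha i hi) (single_le_sum ha hi)
    (hzero i hi)

-- Nonnegativity of mutual information, for unnormalised weights `a`.
lemma sum_sum_negMulLog_add_negMulLog_sum_le (s : Finset ι) (t : Finset κ) (a : ι → κ → ℝ)
    (ha : ∀ i ∈ s, ∀ j ∈ t, 0 ≤ a i j) :
    ∑ i ∈ s, ∑ j ∈ t, negMulLog (a i j) + negMulLog (∑ i ∈ s, ∑ j ∈ t, a i j) ≤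
      ∑ i ∈ s, negMulLog (∑ j ∈ t, a i j) + ∑ j ∈ t, negMulLog (∑ i ∈ s, a i j) := by
  set r := fun i ↦ ∑ j ∈ t, a i j
  set c := fun j ↦ ∑ i ∈ s, a i j
  set m := ∑ i ∈ s, ∑ j ∈ t, a i j
  have hm : ∑ j ∈ t, c j = m := sum_comm
  -- Gibbs' inequality against the product weights `r i * c j / m`, whose total is also `m`.
  have hpoint : ∀ i ∈ s, ∀ j ∈ t,
      a i j * (log (r i) + log (c j) - log m - log (a i j)) ≤ r i * c j / m - a i j := by
    intro i hi j hj
    have hr := single_le_sum (ha i hi) hj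
    have hc := single_le_sum (fun i hi ↦ ha i hi j hj) hi
    exact mul_log_add_log_sub_log_sub_log_le (ha i hi j hj) hr hc
      (hr.trans (single_le_sum (fun i hi ↦ sum_nonneg (ha i hi)) hi))
  have hlhs : ∑ i ∈ s, ∑ j ∈ t, a i j * (log (r i) + log (c j) - log m - log (a i j))
      = ∑ i ∈ s, r i * log (r i) + ∑ j ∈ t, c j * log (c j) - m * log m
        - ∑ i ∈ s, ∑ j ∈ t, a i j * log (a i j) := by
    simp only [mul_sub, mul_add, sum_sub_distrib, sum_add_distrib, ← sum_mul]
    rw [sum_comm (f := fun i j ↦ a i j * log (c j))]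
    simp only [← sum_mul]
    rfl
  have hrhs : ∑ i ∈ s, ∑ j ∈ t, (r i * c j / m - a i j) = 0 := by
    simp only [sum_sub_distrib, ← sum_div, ← mul_sum, ← sum_mul, hm]
    change m * m / m - m = 0
    rw [mul_self_div_self, sub_self]
  have := sum_le_sum fun i hi ↦ sum_le_sum fun j hj ↦ hpoint i hi j hj
  simp only [negMulLog, neg_mul, sum_neg_distrib]
  linarith

end Real

open Real

section UniformProb

variable {α : Type*} [Fintype α]

noncomputable def uniformProb (X : Finset α) : ℝ := (#X : ℝ) / Fintype.card α

lemma uniformProb_nonneg (X : Finset α) : 0 ≤ uniformProb X := by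
  unfold uniformProb; positivity

lemma uniformProb_eq_zero_iff [Nonempty α] {X : Finset α} : uniformProb X = 0 ↔ X = ∅ := by
  simp [uniformProb]

lemma uniformProb_inj [Nonempty α] {X Y : Finset α} :
    uniformProb X = uniformProb Y ↔ #X = #Y := by
  have hcard : (Fintype.card α : ℝ) ≠ 0 := by positivity
  simp [uniformProb, div_left_inj' hcard]

lemma sum_uniformProb_inter [DecidableEq α] (P : Finpartition (univ : Finset α)) (X : Finset α) :
    ∑ B ∈ P.parts, uniformProb (B ∩ X) = uniformProb X := by
  have hcard : ∑ B ∈ P.parts, #(B ∩ X) = #X :=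
    (P.sum_restrict (subset_univ X) card card_empty).symm.trans (P.restrict _).sum_card_parts
  simp only [uniformProb, ← sum_div, ← Nat.cast_sum, hcard]

lemma sum_uniformProb_inter_left [DecidableEq α] (P : Finpartition (univ : Finset α))
    (X : Finset α) : ∑ B ∈ P.parts, uniformProb (X ∩ B) = uniformProb X := by
  simp only [inter_comm X, sum_uniformProb_inter]

lemma negMulLog_uniformProb_le_sum_inter [DecidableEq α] (P : Finpartition (univ : Finset α))
    (X : Finset α) :
    negMulLog (uniformProb X) ≤ ∑ B ∈ P.parts, negMulLog (uniformProb (X ∩ B)) := by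
  rw [← sum_uniformProb_inter_left P X]
  exact negMulLog_sum_le fun B _ ↦ uniformProb_nonneg _

end UniformProb

lemma partitionEntropy_eq_sum (P : Finpartition (univ : Finset S)) :
    partitionEntropy P = ∑ B ∈ P.parts, negMulLog (uniformProb B) := by
  simp only [partitionEntropy, negMulLog, neg_mul, uniformProb, sum_neg_distrib]

lemma jointEntropy_eq_sum (P Q : Finpartition (univ : Finset S)) :
    jointEntropy P Q = ∑ B ∈ P.parts, ∑ C ∈ Q.parts, negMulLog (uniformProb (B ∩ C)) := by
  simp only [jointEntropy, negMulLog, neg_mul, uniformProb, sum_neg_distrib]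

lemma jointEntropy_comm (P Q : Finpartition (univ : Finset S)) :
    jointEntropy P Q = jointEntropy Q P := by
  rw [jointEntropy_eq_sum, jointEntropy_eq_sum, sum_comm]
  simp only [inter_comm]

lemma jointEntropy_self (P : Finpartition (univ : Finset S)) :
    jointEntropy P P = partitionEntropy P := by
  rw [jointEntropy_eq_sum, partitionEntropy_eq_sum]
  refine sum_congr rfl fun B hB ↦ ?_
  rw [sum_eq_single_of_mem B hB fun C hC hCB ↦ ?_, inter_self]
  have hBC : B ∩ C = ∅ := disjoint_iff_inter_eq_empty.1 (P.disjoint hB hC hCB.symm)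
  simp [hBC, uniformProb]

lemma partitionEntropy_le_jointEntropy (P Q : Finpartition (univ : Finset S)) :
    partitionEntropy P ≤ jointEntropy P Q := by
  rw [partitionEntropy_eq_sum, jointEntropy_eq_sum]
  exact sum_le_sum fun B _ ↦ negMulLog_uniformProb_le_sum_inter Q B

lemma partitionEntropy_le_jointEntropy_right (P Q : Finpartition (univ : Finset S)) :
    partitionEntropy Q ≤ jointEntropy P Q :=
  jointEntropy_comm Q P ▸ partitionEntropy_le_jointEntropy Q P

lemma le_of_jointEntropy_eq_partitionEntropy {P Q : Finpartition (univ : Finset S)}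
    (h : jointEntropy P Q = partitionEntropy P) : P ≤ Q := by
  intro B hB
  have hgap : ∀ B ∈ P.parts,
      0 ≤ ∑ C ∈ Q.parts, negMulLog (uniformProb (B ∩ C)) - negMulLog (uniformProb B) :=
    fun B _ ↦ sub_nonneg.2 (negMulLog_uniformProb_le_sum_inter Q B)
  have hequal : negMulLog (∑ C ∈ Q.parts, uniformProb (B ∩ C))
      = ∑ C ∈ Q.parts, negMulLog (uniformProb (B ∩ C)) := by
    have hsum : ∑ B ∈ P.parts, (∑ C ∈ Q.parts, negMulLog (uniformProb (B ∩ C))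
        - negMulLog (uniformProb B)) = 0 := by
      rw [sum_sub_distrib, ← jointEntropy_eq_sum, ← partitionEntropy_eq_sum, h, sub_self]
    have hzero := (sum_eq_zero_iff_of_nonneg hgap).1 hsum B hB
    rw [sum_uniformProb_inter_left, ← sub_eq_zero.1 hzero]
  obtain ⟨x, hx⟩ := P.nonempty_of_mem_parts hB
  have : Nonempty S := ⟨x⟩
  obtain ⟨C, hC, hxC⟩ := Q.exists_mem (mem_univ x)
  refine ⟨C, hC, ?_⟩
  rcases eq_zero_or_eq_sum_of_negMulLog_sum_eq (fun C _ ↦ uniformProb_nonneg _) hequal C hC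
    with hempty | hfull
  · exact absurd (uniformProb_eq_zero_iff.1 hempty)
      (nonempty_iff_ne_empty.1 ⟨x, mem_inter.2 ⟨hx, hxC⟩⟩)
  · rw [sum_uniformProb_inter_left, uniformProb_inj] at hfull
    exact inter_eq_left.1 (eq_of_subset_of_card_le inter_subset_left hfull.ge)

noncomputable def tripleEntropy (P Q R : Finpartition (univ : Finset S)) : ℝ :=
  ∑ B ∈ P.parts, ∑ C ∈ Q.parts, ∑ D ∈ R.parts, negMulLog (uniformProb (B ∩ C ∩ D))

lemma jointEntropy_le_tripleEntropy (P Q R : Finpartition (univ : Finset S)) :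
    jointEntropy P R ≤ tripleEntropy P Q R := by
  rw [jointEntropy_eq_sum, tripleEntropy]
  refine sum_le_sum fun B _ ↦ ?_
  rw [sum_comm]
  refine sum_le_sum fun D _ ↦ ?_
  rw [← sum_uniformProb_inter Q (B ∩ D)]
  simp only [inter_right_comm B, inter_comm _ (B ∩ D)]
  exact negMulLog_sum_le fun C _ ↦ uniformProb_nonneg _

lemma tripleEntropy_add_partitionEntropy_le (P Q R : Finpartition (univ : Finset S)) :
    tripleEntropy P Q R + partitionEntropy Q ≤ jointEntropy P Q + jointEntropy Q R := by
  have hblock : ∀ C ∈ Q.parts,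
      ∑ B ∈ P.parts, ∑ D ∈ R.parts, negMulLog (uniformProb (B ∩ C ∩ D))
        + negMulLog (uniformProb C)
      ≤ ∑ B ∈ P.parts, negMulLog (uniformProb (B ∩ C))
        + ∑ D ∈ R.parts, negMulLog (uniformProb (C ∩ D)) := by
    intro C _
    have h := sum_sum_negMulLog_add_negMulLog_sum_le P.parts R.parts
      (fun B D ↦ uniformProb (B ∩ C ∩ D)) fun _ _ _ _ ↦ uniformProb_nonneg _
    simp only [sum_uniformProb_inter_left, sum_uniformProb_inter] at h
    simpa only [inter_assoc, sum_uniformProb_inter] using h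
  have htotal := sum_le_sum hblock
  simp only [sum_add_distrib] at htotal
  rw [tripleEntropy, sum_comm, partitionEntropy_eq_sum, jointEntropy_eq_sum,
    sum_comm (s := P.parts) (t := Q.parts), jointEntropy_eq_sum]
  exact htotal

lemma VI_comm (P Q : Finpartition (univ : Finset S)) : VI P Q = VI Q P := by
  rw [VI, VI, jointEntropy_comm]
  ring

lemma VI_nonneg (P Q : Finpartition (univ : Finset S)) : 0 ≤ VI P Q := by
  have hP := partitionEntropy_le_jointEntropy P Q
  have hQ := partitionEntropy_le_jointEntropy_right P Q
  rw [VI]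
  linarith

lemma VI_eq_zero_iff (P Q : Finpartition (univ : Finset S)) : VI P Q = 0 ↔ P = Q := by
  refine ⟨fun h ↦ ?_, fun h ↦ by rw [h, VI, jointEntropy_self]; ring⟩
  have hP := partitionEntropy_le_jointEntropy P Q
  have hQ := partitionEntropy_le_jointEntropy_right P Q
  rw [VI] at h
  apply le_antisymm <;> apply le_of_jointEntropy_eq_partitionEntropy
  · linarith
  · rw [jointEntropy_comm]
    linarith

lemma VI_triangle (P Q R : Finpartition (univ : Finset S)) : VI P R ≤ VI P Q + VI Q R := by
  have h₁ := jointEntropy_le_tripleEntropy P Q R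
  have h₂ := tripleEntropy_add_partitionEntropy_le P Q R
  simp only [VI]
  linarith

/-- The variation of information is a metric on the set of partitions of a
finite set: it is nonnegative, vanishes exactly when the partitions coincide, is
symmetric, and satisfies the triangle inequality. -/
theorem VI_is_metric :
    (∀ P Q : Finpartition (univ : Finset S), 0 ≤ VI P Q) ∧
      (∀ P Q : Finpartition (univ : Finset S), VI P Q = 0 ↔ P = Q) ∧
      (∀ P Q : Finpartition (univ : Finset S), VI P Q = VI Q P) ∧
      (∀ P Q R : Finpartition (univ : Finset S), VI P R ≤ VI P Q + VI Q R) :=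
  ⟨VI_nonneg, VI_eq_zero_iff, VI_comm, VI_triangle⟩
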